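/- arXiv:2305.10015 — 3 statements merged into one kernel-verified Lean document; each statement's English description precedes it below -/
import Mathlib

section
/- Consistent model comparison for regression (Theorem 4, regression part). Assume p_X and p_X̃ satisfy the (V, d)-fidelity level with 0 < d < ∞. Let μ : 𝒳 → ℝ be measurable, let F₁ and F₂ be sets of measurable functions, and for i = 1, 2 let f*_i ∈ F_i minimize Φ_s(f) = ∫(f − μ)² p_X over F_i, with Φ_s(f*₂) < Φ_s(f*₁). Let U ≥ 0 be a constant and suppose C_{d,V,U}²·Φ_s(f*₂)^{d²/(d+1)²} < Φ_s(f*₁), where C_{d,V,U} = (d^{1/(d+1)} + d^{−d/(d+1)})^{(3d+1)/(2(d+1))}·V^{(2d+1)/(2(d+1)²)}·U^{(2d+1)/(d+1)²}. Let (μ̂_n)_{n≥1} be random measurable functions on a probability space (Ω, P) such that: the real random variables ‖μ̂_n − μ‖_{L²(P_X)} are measurable and converge to 0 in probability as n → ∞, and |f(x) − μ̂_n(ω)(x)| ≤ U for all f ∈ F₂, all x ∈ 𝒳, all n and P-almost every ω. For each n and ω, let f̃*_{i,n,ω} ∈ F_i minimize ∫(f − μ̂_n(ω))² p_X̃ over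 F_i (i = 1, 2), and assume the events {ω : Φ_s(f̃*_{1,n,ω}) > Φ_s(f̃*_{2,n,ω})} are measurable. Then P( Φ_s(f̃*_{1,n}) > Φ_s(f̃*_{2,n}) ) → 1 as n → ∞. -/
/-!
Split `∫ h p` along `{C q ≤ p}`: the fidelity tail bound gives `∫ h p ≤ M V C^(-d) + C ∫ h q`
whenever `0 ≤ h ≤ M`, and optimizing in `C` bounds `∫ h p` by a constant times
`(∫ h q)^(d/(d+1))`. Move `(f*₂ - μ̂_n)²` from `p_X` to `p_X̃`, use the minimality of `f̃*₂`
under `p_X̃`, and move `(f̃*₂ - μ̂_n)²` back: with two triangle inequalities in `L²(P_X)` this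
bounds `Φ_s(f̃*₂)` by a continuous function of `‖μ̂_n - μ‖` whose value at `0` is
`C_{d,V,U}² Φ_s(f*₂)^(d²/(d+1)²) < Φ_s(f*₁)`. So once `‖μ̂_n - μ‖` is small, which happens with
probability tending to one, `Φ_s(f̃*₂) < Φ_s(f*₁) ≤ Φ_s(f̃*₁)`.
-/

open MeasureTheory Filter Topology
open scoped ENNReal

noncomputable def fidelityConst (d : ℝ) : ℝ := d ^ (1 / (d + 1)) + d ^ (-(d / (d + 1)))

lemma one_le_fidelityConst {d : ℝ} (hd : 0 < d) : 1 ≤ fidelityConst d := by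
  have hδ : 0 ≤ d / (d + 1) := by positivity
  unfold fidelityConst
  rcases le_total 1 d with h1 | h1
  · linarith [Real.one_le_rpow h1 (by positivity : (0 : ℝ) ≤ 1 / (d + 1)),
      Real.rpow_nonneg hd.le (-(d / (d + 1)))]
  · linarith [Real.one_le_rpow_of_pos_of_le_one_of_nonpos hd h1 (neg_nonpos.2 hδ),
      Real.rpow_nonneg hd.le (1 / (d + 1))]

/-- The choice `C^(d+1) = d a / t` balances the two terms. -/
lemma exists_rpow_neg_add_mul_eq {a t d : ℝ} (hd : 0 < d) (ha : 0 < a) (ht : 0 < t) :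
    ∃ C > 0, a * C ^ (-d) + C * t =
      fidelityConst d * a ^ (1 / (d + 1)) * t ^ (d / (d + 1)) := by
  have hd1 : 0 < d + 1 := by linarith
  set C := (d * a / t) ^ (1 / (d + 1)) with hC
  have hCpos : 0 < C := by positivity
  refine ⟨C, hCpos, ?_⟩
  have hCpow : C ^ d * C * t = d * a := by
    rw [← Real.rpow_add_one hCpos.ne', hC, ← Real.rpow_mul (by positivity),
      one_div_mul_cancel hd1.ne', Real.rpow_one, div_mul_cancel₀ _ ht.ne']
  have hfirst : a * C ^ (-d) = C * t / d := by
    rw [Real.rpow_neg hCpos.le]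
    field_simp
    linear_combination -hCpow
  have hsecond : C * t = d ^ (1 / (d + 1)) * a ^ (1 / (d + 1)) * t ^ (d / (d + 1)) := by
    have ht_split : t = t ^ (1 / (d + 1)) * t ^ (d / (d + 1)) := by
      rw [← Real.rpow_add ht, ← add_div, add_comm, div_self hd1.ne', Real.rpow_one]
    rw [hC, Real.div_rpow (by positivity) ht.le, Real.mul_rpow hd.le ha.le]
    nth_rewrite 2 [ht_split]
    field_simp
  have hd_neg : d ^ (-(d / (d + 1))) = d ^ (1 / (d + 1)) / d := by
    rw [← Real.rpow_sub_one hd.ne']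
    congr 1
    field_simp
    ring
  rw [hfirst, fidelityConst, hd_neg, hsecond]
  field_simp
  ring

lemma le_fidelityConst_mul_of_forall_le {a t d x : ℝ} (hd : 0 < d) (ha : 0 ≤ a) (ht : 0 ≤ t)
    (h : ∀ C > 0, x ≤ a * C ^ (-d) + C * t) :
    x ≤ fidelityConst d * a ^ (1 / (d + 1)) * t ^ (d / (d + 1)) := by
  -- perturbing `a` and `t` to positive values avoids the degenerate cases
  have hpos : ∀ η > 0,
      x ≤ fidelityConst d * (a + η) ^ (1 / (d + 1)) * (t + η) ^ (d / (d + 1)) := by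
    intro η hη
    obtain ⟨C, hC, hCeq⟩ :=
      exists_rpow_neg_add_mul_eq hd (by linarith : 0 < a + η) (by linarith : 0 < t + η)
    refine (h C hC).trans (hCeq ▸ ?_)
    gcongr <;> linarith [Real.rpow_nonneg hC.le (-d)]
  have hcont : Continuous fun η =>
      fidelityConst d * (a + η) ^ (1 / (d + 1)) * (t + η) ^ (d / (d + 1)) := by
    have h1 : (0 : ℝ) ≤ 1 / (d + 1) := by positivity
    have h2 : (0 : ℝ) ≤ d / (d + 1) := by positivity
    fun_prop (disch := assumption)
  have hlim := tendsto_nhdsWithin_of_tendsto_nhds (s := Set.Ioi 0) (hcont.tendsto 0)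
  simp only [add_zero] at hlim
  exact ge_of_tendsto hlim (eventually_nhdsWithin_of_forall hpos)

section Transfer

variable {α : Type*} [MeasurableSpace α] {ν : Measure α} {s : Set α} {p q h : α → ℝ}

lemma setLIntegral_le_of_tail_le (hs : MeasurableSet s) (hp : Measurable p) (hq : Measurable q)
    (hp0 : ∀ x ∈ s, 0 ≤ p x) (hpi : IntegrableOn p s ν) {M B C : ℝ} (hM : 0 ≤ M)
    (hh0 : ∀ x ∈ s, 0 ≤ h x) (hhM : ∀ x ∈ s, h x ≤ M) (hC : 0 < C)
    (htail : ∫ x in {x ∈ s | C * q x ≤ p x}, p x ∂ν ≤ B) :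
    ∫⁻ x in s, ENNReal.ofReal (h x * p x) ∂ν ≤
      ENNReal.ofReal (M * B) + ENNReal.ofReal C * ∫⁻ x in s, ENNReal.ofReal (h x * q x) ∂ν := by
  set D := {x | C * q x ≤ p x}
  have hD : MeasurableSet D := measurableSet_le (hq.const_mul C) hp
  rw [← lintegral_inter_add_sdiff _ s hD]
  gcongr
  · calc ∫⁻ x in s ∩ D, ENNReal.ofReal (h x * p x) ∂ν
        ≤ ∫⁻ x in s ∩ D, ENNReal.ofReal (M * p x) ∂ν :=
          setLIntegral_mono' (hs.inter hD) fun x hx =>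
            ENNReal.ofReal_le_ofReal (mul_le_mul_of_nonneg_right (hhM x hx.1) (hp0 x hx.1))
      _ = ENNReal.ofReal (M * ∫ x in s ∩ D, p x ∂ν) := by
          rw [← integral_const_mul, ofReal_integral_eq_lintegral_ofReal
            ((hpi.mono_set Set.inter_subset_left).const_mul M)
            ((ae_restrict_iff' (hs.inter hD)).2 (Eventually.of_forall fun x hx =>
              mul_nonneg hM (hp0 x hx.1)))]
      _ ≤ ENNReal.ofReal (M * B) := ENNReal.ofReal_le_ofReal (by gcongr; exact htail)
  · calc ∫⁻ x in s \ D, ENNReal.ofReal (h x * p x) ∂ν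
        ≤ ∫⁻ x in s \ D, ENNReal.ofReal C * ENNReal.ofReal (h x * q x) ∂ν := by
          refine setLIntegral_mono' (hs.diff hD) fun x hx => ?_
          rw [← ENNReal.ofReal_mul hC.le]
          have hlt : p x < C * q x := not_le.1 hx.2
          exact ENNReal.ofReal_le_ofReal (by nlinarith [hh0 x hx.1])
      _ ≤ ENNReal.ofReal C * ∫⁻ x in s, ENNReal.ofReal (h x * q x) ∂ν := by
          rw [lintegral_const_mul' _ _ ENNReal.ofReal_ne_top]
          gcongr
          exact Set.sdiff_subset

lemma setLIntegral_le_of_fidelity (hs : MeasurableSet s) (hp : Measurable p) (hq : Measurable q)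
    (hp0 : ∀ x ∈ s, 0 ≤ p x) (hpi : IntegrableOn p s ν) {V d : ℝ} (hV : 0 ≤ V) (hd : 0 < d)
    (hfid : ∀ C : ℝ, 0 < C → ∫ x in {x ∈ s | C * q x ≤ p x}, p x ∂ν ≤ V * C ^ (-d))
    {M t : ℝ} (hM : 0 ≤ M) (hh0 : ∀ x ∈ s, 0 ≤ h x) (hhM : ∀ x ∈ s, h x ≤ M) (ht : 0 ≤ t)
    (hq_le : ∫⁻ x in s, ENNReal.ofReal (h x * q x) ∂ν ≤ ENNReal.ofReal t) :
    ∫⁻ x in s, ENNReal.ofReal (h x * p x) ∂ν ≤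
      ENNReal.ofReal (fidelityConst d * (M * V) ^ (1 / (d + 1)) * t ^ (d / (d + 1))) := by
  have hsplit : ∀ C > 0, ∫⁻ x in s, ENNReal.ofReal (h x * p x) ∂ν ≤
      ENNReal.ofReal (M * V * C ^ (-d) + C * t) := fun C hC => by
    calc _ ≤ ENNReal.ofReal (M * (V * C ^ (-d))) + ENNReal.ofReal C * ENNReal.ofReal t :=
          (setLIntegral_le_of_tail_le hs hp hq hp0 hpi hM hh0 hhM hC (hfid C hC)).trans
            (by gcongr)
      _ = _ := by
          rw [← ENNReal.ofReal_mul hC.le, ← ENNReal.ofReal_add (by positivity) (by positivity),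
            mul_assoc]
  have hfin := (hsplit 1 one_pos).trans_lt ENNReal.ofReal_lt_top |>.ne
  rw [← ENNReal.ofReal_toReal hfin]
  exact ENNReal.ofReal_le_ofReal <| le_fidelityConst_mul_of_forall_le hd (by positivity) ht
    fun C hC => ENNReal.toReal_le_of_le_ofReal (by positivity) (hsplit C hC)

end Transfer

section WeightedSqDist

variable {α : Type*} [MeasurableSpace α] (ν : Measure α) (s : Set α) (p : α → ℝ)

noncomputable def weightedSqDist (f g : α → ℝ) : ℝ≥0∞ :=
  ∫⁻ x in s, ENNReal.ofReal ((f x - g x) ^ 2 * p x) ∂ν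

variable {ν s p}

lemma weightedSqDist_comm (f g : α → ℝ) : weightedSqDist ν s p f g = weightedSqDist ν s p g f := by
  simp only [weightedSqDist, ← neg_sub (f _), neg_sq]

lemma eLpNorm_two_withDensity_eq (hp : Measurable p) {f : α → ℝ} (hf : Measurable f) :
    eLpNorm f 2 ((ν.restrict s).withDensity fun x => ENNReal.ofReal (p x)) =
      weightedSqDist ν s p f 0 ^ (1 / 2 : ℝ) := by
  rw [eLpNorm_eq_lintegral_rpow_enorm_toReal two_ne_zero ENNReal.ofNat_ne_top,
    lintegral_withDensity_eq_lintegral_mul₀ (by fun_prop) (by fun_prop), weightedSqDist]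
  congr 2 with x
  simp only [Real.enorm_eq_ofReal_abs, ENNReal.toReal_ofNat, ENNReal.rpow_ofNat,
    ← ENNReal.ofReal_pow (abs_nonneg _), sq_abs, Pi.mul_apply, Pi.zero_apply, sub_zero, mul_comm]
  rw [ENNReal.ofReal_mul' (sq_nonneg _)]

lemma weightedSqDist_rpow_half_le_add (hp : Measurable p) {f g h : α → ℝ} (hf : Measurable f)
    (hg : Measurable g) (hh : Measurable h) :
    weightedSqDist ν s p f h ^ (1 / 2 : ℝ) ≤
      weightedSqDist ν s p f g ^ (1 / 2 : ℝ) + weightedSqDist ν s p g h ^ (1 / 2 : ℝ) := by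
  have key := eLpNorm_add_le (μ := (ν.restrict s).withDensity fun x => ENNReal.ofReal (p x))
    (hf.sub hg).aestronglyMeasurable (hg.sub hh).aestronglyMeasurable one_le_two
  simp only [eLpNorm_two_withDensity_eq hp (hf.sub hg), eLpNorm_two_withDensity_eq hp (hg.sub hh),
    eLpNorm_two_withDensity_eq hp ((hf.sub hg).add (hg.sub hh))] at key
  simpa [weightedSqDist] using key

end WeightedSqDist

/-- The constant `C_{d,V,U}` of the paper. -/
noncomputable def comparisonConst (d V U : ℝ) : ℝ :=
  fidelityConst d ^ ((3 * d + 1) / (2 * (d + 1))) * V ^ ((2 * d + 1) / (2 * (d + 1) ^ 2)) *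
    U ^ ((2 * d + 1) / (d + 1) ^ 2)

lemma comparisonConst_sq {d V U : ℝ} (hd : 0 < d) (hV : 0 ≤ V) (hU : 0 ≤ U) :
    comparisonConst d V U ^ 2 =
      fidelityConst d ^ ((3 * d + 1) / (d + 1)) * (U ^ 2 * V) ^ ((2 * d + 1) / (d + 1) ^ 2) := by
  have hc : 0 ≤ fidelityConst d := zero_le_one.trans (one_le_fidelityConst hd)
  have hd1 : d + 1 ≠ 0 := by linarith
  rw [comparisonConst, Real.mul_rpow (by positivity) hV, ← Real.rpow_natCast U 2,
    ← Real.rpow_mul hU, mul_pow, mul_pow, ← Real.rpow_mul_natCast hc,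
    ← Real.rpow_mul_natCast hV, ← Real.rpow_mul_natCast hU]
  rw [show (3 * d + 1) / (2 * (d + 1)) * ((2 : ℕ) : ℝ) = (3 * d + 1) / (d + 1) by
      push_cast; field_simp,
    show (2 * d + 1) / (2 * (d + 1) ^ 2) * ((2 : ℕ) : ℝ) = (2 * d + 1) / (d + 1) ^ 2 by
      push_cast; field_simp,
    show (2 * d + 1) / (d + 1) ^ 2 * ((2 : ℕ) : ℝ) = ((2 : ℕ) : ℝ) * ((2 * d + 1) / (d + 1) ^ 2) by
      ring]
  ring

/-- Only `fidelityConst d ^ (1 + d/(d+1))` is needed here; the larger power in `comparisonConst`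
costs nothing because `1 ≤ fidelityConst d`. -/
lemma fidelity_twice_le_comparisonConst {d V U A : ℝ} (hd : 0 < d) (hV : 0 ≤ V) (hU : 0 ≤ U)
    (hA : 0 ≤ A) :
    fidelityConst d * (U ^ 2 * V) ^ (1 / (d + 1)) *
        (fidelityConst d * (U ^ 2 * V) ^ (1 / (d + 1)) * A ^ (d / (d + 1))) ^ (d / (d + 1)) ≤
      comparisonConst d V U ^ 2 * A ^ (d ^ 2 / (d + 1) ^ 2) := by
  have hc1 := one_le_fidelityConst hd
  have hc : 0 ≤ fidelityConst d := zero_le_one.trans hc1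
  have hw : 0 ≤ U ^ 2 * V := by positivity
  have hd1 : 0 < d + 1 := by linarith
  have hδ : 0 ≤ d / (d + 1) := by positivity
  rw [comparisonConst_sq hd hV hU]
  set c := fidelityConst d
  set w := U ^ 2 * V
  clear_value c w
  calc c * w ^ (1 / (d + 1)) * (c * w ^ (1 / (d + 1)) * A ^ (d / (d + 1))) ^ (d / (d + 1))
      = c ^ (1 + d / (d + 1)) * w ^ ((2 * d + 1) / (d + 1) ^ 2) * A ^ (d ^ 2 / (d + 1) ^ 2) := by
        rw [Real.mul_rpow (by positivity) (by positivity), Real.mul_rpow hc (by positivity),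
          ← Real.rpow_mul hw, ← Real.rpow_mul hA, Real.rpow_one_add' hc (by positivity),
          show (2 * d + 1) / (d + 1) ^ 2 = 1 / (d + 1) + 1 / (d + 1) * (d / (d + 1)) by
            field_simp; ring,
          Real.rpow_add' hw (by positivity),
          show d / (d + 1) * (d / (d + 1)) = d ^ 2 / (d + 1) ^ 2 by field_simp]
        ring
    _ ≤ _ := by
        gcongr
        rw [one_add_div hd1.ne', div_le_div_iff_of_pos_right hd1]
        linarith

section Comparison

variable {α : Type*} [MeasurableSpace α] {ν : Measure α} {s : Set α} {p q : α → ℝ} {V d U : ℝ}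

lemma weightedSqDist_le_of_isMinimizer (hs : MeasurableSet s) (hp : Measurable p)
    (hq : Measurable q) (hp0 : ∀ x ∈ s, 0 ≤ p x) (hq0 : ∀ x ∈ s, 0 ≤ q x)
    (hpi : IntegrableOn p s ν) (hqi : IntegrableOn q s ν) (hV : 0 ≤ V) (hd : 0 < d)
    (hpq : ∀ C : ℝ, 0 < C → ∫ x in {x ∈ s | C * q x ≤ p x}, p x ∂ν ≤ V * C ^ (-d))
    (hqp : ∀ C : ℝ, 0 < C → ∫ x in {x ∈ s | C * p x ≤ q x}, q x ∂ν ≤ V * C ^ (-d))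
    {f f' g : α → ℝ} (hU : 0 ≤ U) (hfU : ∀ x ∈ s, |f x - g x| ≤ U)
    (hf'U : ∀ x ∈ s, |f' x - g x| ≤ U)
    (hmin : weightedSqDist ν s q f' g ≤ weightedSqDist ν s q f g) {A : ℝ} (hA : 0 ≤ A)
    (hfA : weightedSqDist ν s p f g ≤ ENNReal.ofReal A) :
    weightedSqDist ν s p f' g ≤
      ENNReal.ofReal (comparisonConst d V U ^ 2 * A ^ (d ^ 2 / (d + 1) ^ 2)) := by
  have hsq : ∀ {f : α → ℝ}, (∀ x ∈ s, |f x - g x| ≤ U) → ∀ x ∈ s, (f x - g x) ^ 2 ≤ U ^ 2 :=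
    fun h x hx => by simpa only [sq_abs] using pow_le_pow_left₀ (abs_nonneg _) (h x hx) 2
  have hfq := setLIntegral_le_of_fidelity (h := fun x => (f x - g x) ^ 2) hs hq hp hq0 hqi hV hd
    hqp (sq_nonneg U) (fun x _ => sq_nonneg _) (hsq hfU) hA hfA
  have hc : 0 ≤ fidelityConst d := zero_le_one.trans (one_le_fidelityConst hd)
  have hf'p := setLIntegral_le_of_fidelity (h := fun x => (f' x - g x) ^ 2) hs hp hq hp0 hpi hV hd
    hpq (sq_nonneg U) (fun x _ => sq_nonneg _) (hsq hf'U) (by positivity) (hmin.trans hfq)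
  exact hf'p.trans (ENNReal.ofReal_le_ofReal (fidelity_twice_le_comparisonConst hd hV hU hA))

lemma le_sq_of_rpow_half_le {x y : ℝ≥0∞} (h : x ^ (1 / 2 : ℝ) ≤ y) : x ≤ y ^ 2 := by
  rwa [one_div, ENNReal.rpow_inv_le_iff two_pos, ENNReal.rpow_two] at h

lemma weightedSqDist_rpow_half_le_of_isMinimizer (hs : MeasurableSet s) (hp : Measurable p)
    (hq : Measurable q) (hp0 : ∀ x ∈ s, 0 ≤ p x) (hq0 : ∀ x ∈ s, 0 ≤ q x)
    (hpi : IntegrableOn p s ν) (hqi : IntegrableOn q s ν) (hV : 0 ≤ V) (hd : 0 < d)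
    (hpq : ∀ C : ℝ, 0 < C → ∫ x in {x ∈ s | C * q x ≤ p x}, p x ∂ν ≤ V * C ^ (-d))
    (hqp : ∀ C : ℝ, 0 < C → ∫ x in {x ∈ s | C * p x ≤ q x}, q x ∂ν ≤ V * C ^ (-d))
    {μ f f' g : α → ℝ} (hμ : Measurable μ) (hf : Measurable f) (hf' : Measurable f')
    (hg : Measurable g) (hU : 0 ≤ U) (hfU : ∀ x ∈ s, |f x - g x| ≤ U)
    (hf'U : ∀ x ∈ s, |f' x - g x| ≤ U)
    (hmin : weightedSqDist ν s q f' g ≤ weightedSqDist ν s q f g)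
    (hfμ : weightedSqDist ν s p f μ ≠ ∞) {e : ℝ≥0∞} (he : e ≠ ∞)
    (hgμ : weightedSqDist ν s p g μ ^ (1 / 2 : ℝ) ≤ e) :
    weightedSqDist ν s p f' μ ^ (1 / 2 : ℝ) ≤
      (ENNReal.ofReal (comparisonConst d V U ^ 2) *
        ((weightedSqDist ν s p f μ ^ (1 / 2 : ℝ) + e) ^ 2) ^ (d ^ 2 / (d + 1) ^ 2)) ^ (1 / 2 : ℝ)
        + e := by
  set X := (weightedSqDist ν s p f μ ^ (1 / 2 : ℝ) + e) ^ 2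
  have hX : X ≠ ∞ := by finiteness
  have hfX : weightedSqDist ν s p f g ≤ X := by
    refine le_sq_of_rpow_half_le ((weightedSqDist_rpow_half_le_add hp hf hμ hg).trans ?_)
    rw [weightedSqDist_comm μ]
    gcongr
  have hf'X : weightedSqDist ν s p f' g ≤
      ENNReal.ofReal (comparisonConst d V U ^ 2) * X ^ (d ^ 2 / (d + 1) ^ 2) := by
    rw [← ENNReal.ofReal_toReal hX] at hfX ⊢
    rw [ENNReal.ofReal_rpow_of_nonneg ENNReal.toReal_nonneg (by positivity),
      ← ENNReal.ofReal_mul (sq_nonneg _)]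
    exact weightedSqDist_le_of_isMinimizer hs hp hq hp0 hq0 hpi hqi hV hd hpq hqp hU hfU hf'U
      hmin ENNReal.toReal_nonneg hfX
  calc weightedSqDist ν s p f' μ ^ (1 / 2 : ℝ)
      ≤ weightedSqDist ν s p f' g ^ (1 / 2 : ℝ) + weightedSqDist ν s p g μ ^ (1 / 2 : ℝ) :=
        weightedSqDist_rpow_half_le_add hp hf' hg hμ
    _ ≤ _ := by gcongr

end Comparison

lemma exists_pos_rpow_half_add_lt {c Y Z : ℝ≥0∞} (hc : c ≠ ∞) {γ : ℝ} (h : c * Y ^ γ < Z) :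
    ∃ ε > 0, (c * ((Y ^ (1 / 2 : ℝ) + ENNReal.ofReal ε) ^ 2) ^ γ) ^ (1 / 2 : ℝ) +
      ENNReal.ofReal ε < Z ^ (1 / 2 : ℝ) := by
  set G : ℝ → ℝ≥0∞ := fun ε =>
    (c * ((Y ^ (1 / 2 : ℝ) + ENNReal.ofReal ε) ^ 2) ^ γ) ^ (1 / 2 : ℝ) + ENNReal.ofReal ε
  have hG : Continuous G := by
    have := ENNReal.continuous_const_mul hc
    have := ENNReal.continuous_ofReal
    fun_prop
  have hG0 : G 0 < Z ^ (1 / 2 : ℝ) := by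
    have hY : (Y ^ (1 / 2 : ℝ)) ^ 2 = Y := by
      rw [← ENNReal.rpow_natCast, ← ENNReal.rpow_mul]; norm_num
    simpa only [G, ENNReal.ofReal_zero, add_zero, hY] using
      ENNReal.rpow_lt_rpow h (by norm_num : (0 : ℝ) < 1 / 2)
  have hev : ∀ᶠ ε in 𝓝[>] (0 : ℝ), G ε < Z ^ (1 / 2 : ℝ) ∧ 0 < ε :=
    ((hG.tendsto 0).eventually_lt_const hG0 |>.filter_mono nhdsWithin_le_nhds).and
      self_mem_nhdsWithin
  obtain ⟨ε, hεG, hε⟩ := hev.exists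
  exact ⟨ε, hε, hεG⟩

lemma tendsto_measure_one_of_ae_imp {Ω ι : Type*} [MeasurableSpace Ω] {P : Measure Ω}
    [IsProbabilityMeasure P] {l : Filter ι} {B E : ι → Set Ω}
    (hB : Tendsto (fun n => P (B n)) l (𝓝 0)) (hE : ∀ n, ∀ᵐ ω ∂P, ω ∉ B n → ω ∈ E n) :
    Tendsto (fun n => P (E n)) l (𝓝 1) := by
  have hlow : ∀ n, 1 - P (B n) ≤ P (E n) := fun n => by
    refine le_trans ?_ (measure_mono_ae (hE n))
    rw [tsub_le_iff_left, ← measure_univ (μ := P), ← Set.union_compl_self (B n)]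
    exact measure_union_le _ _
  have h1 : Tendsto (fun n => 1 - P (B n)) l (𝓝 1) := by
    simpa using ENNReal.Tendsto.sub tendsto_const_nhds hB (Or.inl ENNReal.one_ne_top)
  exact tendsto_of_tendsto_of_tendsto_of_le_of_le h1 tendsto_const_nhds hlow
    fun n => prob_le_one

theorem stmt14_general
    {k : ℕ} (𝒳 : Set (Fin k → ℝ)) (h𝒳 : MeasurableSet 𝒳)
    (pX pXt : (Fin k → ℝ) → ℝ)
    (hpX_meas : Measurable pX) (hpXt_meas : Measurable pXt)
    (hpX_nonneg : ∀ x ∈ 𝒳, 0 ≤ pX x) (hpXt_nonneg : ∀ x ∈ 𝒳, 0 ≤ pXt x)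
    (hpX_int : IntegrableOn pX 𝒳) (hpXt_int : IntegrableOn pXt 𝒳)
    (V d : ℝ) (hV : 0 ≤ V) (hd : 0 < d)
    -- (V, d)-fidelity level
    (hfid : ∀ C : ℝ, 0 < C →
      (∫ x in {x ∈ 𝒳 | C * pXt x ≤ pX x}, pX x) ≤ V * C ^ (-d) ∧
      (∫ x in {x ∈ 𝒳 | C * pX x ≤ pXt x}, pXt x) ≤ V * C ^ (-d))
    (μ : (Fin k → ℝ) → ℝ) (hμ : Measurable μ)
    (F1 F2 : Set ((Fin k → ℝ) → ℝ))
    (hF2 : ∀ f ∈ F2, Measurable f)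
    -- excess risk under the original distribution
    (Φs : ((Fin k → ℝ) → ℝ) → ℝ≥0∞)
    (hΦs : ∀ f, Φs f = ∫⁻ x in 𝒳, ENNReal.ofReal ((f x - μ x) ^ 2 * pX x))
    (f1 f2 : (Fin k → ℝ) → ℝ) (hf2 : f2 ∈ F2)
    (hf1_min : ∀ f ∈ F1, Φs f1 ≤ Φs f)
    (hlt : Φs f2 < Φs f1)
    (U : ℝ) (hU : 0 ≤ U)
    -- gap condition: C_{d,V,U}² Φ_s(f*₂)^{d²/(d+1)²} < Φ_s(f*₁)
    (hgap : ENNReal.ofReal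
        (((d ^ (1 / (d + 1)) + d ^ (-(d / (d + 1)))) ^ ((3 * d + 1) / (2 * (d + 1)))
            * V ^ ((2 * d + 1) / (2 * (d + 1) ^ 2)) * U ^ ((2 * d + 1) / (d + 1) ^ 2)) ^ 2)
        * Φs f2 ^ (d ^ 2 / (d + 1) ^ 2) < Φs f1)
    -- the sequence of estimates μ̂_n on a probability space (Ω, P)
    {Ω : Type*} [MeasurableSpace Ω] (P : Measure Ω) [IsProbabilityMeasure P]
    (μhat : ℕ → Ω → (Fin k → ℝ) → ℝ)
    (hμhat_mble : ∀ n ω, Measurable (μhat n ω))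
    -- ‖μ̂_n − μ‖_{L²(P_X)} → 0 in probability
    (hconv : ∀ ε : ℝ, 0 < ε →
      Tendsto (fun n => P {ω | ENNReal.ofReal ε <
          (∫⁻ x in 𝒳, ENNReal.ofReal ((μhat n ω x - μ x) ^ 2 * pX x)) ^ ((1 : ℝ) / 2)})
        atTop (nhds 0))
    -- |f − μ̂_n| ≤ U on 𝒳 for all f ∈ F₂, almost surely
    (hbdd : ∀ n, ∀ᵐ ω ∂P, ∀ f ∈ F2, ∀ x ∈ 𝒳, |f x - μhat n ω x| ≤ U)
    -- minimizers of the synthetic excess risk over F₁ and F₂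
    (ft1 ft2 : ℕ → Ω → (Fin k → ℝ) → ℝ)
    (hft1 : ∀ n ω, ft1 n ω ∈ F1 ∧ ∀ f ∈ F1,
      (∫⁻ x in 𝒳, ENNReal.ofReal ((ft1 n ω x - μhat n ω x) ^ 2 * pXt x)) ≤
        ∫⁻ x in 𝒳, ENNReal.ofReal ((f x - μhat n ω x) ^ 2 * pXt x))
    (hft2 : ∀ n ω, ft2 n ω ∈ F2 ∧ ∀ f ∈ F2,
      (∫⁻ x in 𝒳, ENNReal.ofReal ((ft2 n ω x - μhat n ω x) ^ 2 * pXt x)) ≤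
        ∫⁻ x in 𝒳, ENNReal.ofReal ((f x - μhat n ω x) ^ 2 * pXt x)) :
    Tendsto (fun n => P {ω | Φs (ft2 n ω) < Φs (ft1 n ω)}) atTop (nhds 1) := by
  have hΦ : ∀ f, Φs f = weightedSqDist volume 𝒳 pX f μ := hΦs
  obtain ⟨ε, hε, hεlt⟩ := exists_pos_rpow_half_add_lt ENNReal.ofReal_ne_top hgap
  refine tendsto_measure_one_of_ae_imp (hconv ε hε) fun n => ?_
  filter_upwards [hbdd n] with ω hUω hnorm
  obtain ⟨hft1_mem, -⟩ := hft1 n ω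
  obtain ⟨hft2_mem, hft2_min⟩ := hft2 n ω
  have hbound := weightedSqDist_rpow_half_le_of_isMinimizer h𝒳 hpX_meas hpXt_meas hpX_nonneg
    hpXt_nonneg hpX_int hpXt_int hV hd (fun C hC => (hfid C hC).1) (fun C hC => (hfid C hC).2)
    hμ (hF2 f2 hf2) (hF2 _ hft2_mem) (hμhat_mble n ω) hU (hUω f2 hf2) (hUω _ hft2_mem)
    (hft2_min f2 hf2) (hΦ f2 ▸ hlt.ne_top) ENNReal.ofReal_ne_top (not_lt.1 hnorm)
  rw [← hΦ, ← hΦ] at hbound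
  have hlt₂ : Φs (ft2 n ω) < Φs f1 :=
    (ENNReal.rpow_lt_rpow_iff (by norm_num : (0 : ℝ) < 1 / 2)).1 (hbound.trans_lt hεlt)
  exact hlt₂.trans_le (hf1_min _ hft1_mem)

/-- **Consistent model comparison for regression (Theorem 4, regression part).**
Excess risks are expressed as lower Lebesgue integrals (so that no integrability
assumptions are needed): `Φ_s(f) = ∫⁻ (f − μ)² p_X` and, for the estimate `μ̂_n(ω)`,
the synthetic excess risk is `∫⁻ (f − μ̂_n(ω))² p_X̃`.  `f1` and `f2` minimize `Φ_s`
over `F₁` and `F₂` with `Φ_s(f2) < Φ_s(f1)` and the gap condition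
`C_{d,V,U}² Φ_s(f2)^{d²/(d+1)²} < Φ_s(f1)`, `‖μ̂_n − μ‖_{L²(P_X)} → 0` in probability,
`|f − μ̂_n| ≤ U` on `𝒳` for all `f ∈ F₂` a.s., and `ft1 n ω`, `ft2 n ω` minimize the
synthetic excess risk over `F₁`, `F₂`.  Then
`P(Φ_s(ft2 n) < Φ_s(ft1 n)) → 1`. -/
theorem stmt14
    {k : ℕ} (𝒳 : Set (Fin k → ℝ)) (h𝒳 : MeasurableSet 𝒳)
    (pX pXt : (Fin k → ℝ) → ℝ)
    (hpX_meas : Measurable pX) (hpXt_meas : Measurable pXt)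
    (hpX_nonneg : ∀ x ∈ 𝒳, 0 ≤ pX x) (hpXt_nonneg : ∀ x ∈ 𝒳, 0 ≤ pXt x)
    (hpX_int : IntegrableOn pX 𝒳) (hpXt_int : IntegrableOn pXt 𝒳)
    (hpX_one : (∫ x in 𝒳, pX x) = 1) (hpXt_one : (∫ x in 𝒳, pXt x) = 1)
    (V d : ℝ) (hV : 0 ≤ V) (hd : 0 < d)
    -- (V, d)-fidelity level
    (hfid : ∀ C : ℝ, 0 < C →
      (∫ x in {x ∈ 𝒳 | C * pXt x ≤ pX x}, pX x) ≤ V * C ^ (-d) ∧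
      (∫ x in {x ∈ 𝒳 | C * pX x ≤ pXt x}, pXt x) ≤ V * C ^ (-d))
    (μ : (Fin k → ℝ) → ℝ) (hμ : Measurable μ)
    (F1 F2 : Set ((Fin k → ℝ) → ℝ))
    (hF1 : ∀ f ∈ F1, Measurable f) (hF2 : ∀ f ∈ F2, Measurable f)
    -- excess risk under the original distribution
    (Φs : ((Fin k → ℝ) → ℝ) → ℝ≥0∞)
    (hΦs : ∀ f, Φs f = ∫⁻ x in 𝒳, ENNReal.ofReal ((f x - μ x) ^ 2 * pX x))
    (f1 f2 : (Fin k → ℝ) → ℝ) (hf1 : f1 ∈ F1) (hf2 : f2 ∈ F2)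
    (hf1_min : ∀ f ∈ F1, Φs f1 ≤ Φs f) (hf2_min : ∀ f ∈ F2, Φs f2 ≤ Φs f)
    (hlt : Φs f2 < Φs f1)
    (U : ℝ) (hU : 0 ≤ U)
    -- gap condition: C_{d,V,U}² Φ_s(f*₂)^{d²/(d+1)²} < Φ_s(f*₁)
    (hgap : ENNReal.ofReal
        (((d ^ (1 / (d + 1)) + d ^ (-(d / (d + 1)))) ^ ((3 * d + 1) / (2 * (d + 1)))
            * V ^ ((2 * d + 1) / (2 * (d + 1) ^ 2)) * U ^ ((2 * d + 1) / (d + 1) ^ 2)) ^ 2)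
        * Φs f2 ^ (d ^ 2 / (d + 1) ^ 2) < Φs f1)
    -- the sequence of estimates μ̂_n on a probability space (Ω, P)
    {Ω : Type*} [MeasurableSpace Ω] (P : Measure Ω) [IsProbabilityMeasure P]
    (μhat : ℕ → Ω → (Fin k → ℝ) → ℝ)
    (hμhat_mble : ∀ n ω, Measurable (μhat n ω))
    (hnorm_meas : ∀ n, Measurable fun ω =>
      (∫⁻ x in 𝒳, ENNReal.ofReal ((μhat n ω x - μ x) ^ 2 * pX x)) ^ ((1 : ℝ) / 2))
    -- ‖μ̂_n − μ‖_{L²(P_X)} → 0 in probability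
    (hconv : ∀ ε : ℝ, 0 < ε →
      Tendsto (fun n => P {ω | ENNReal.ofReal ε <
          (∫⁻ x in 𝒳, ENNReal.ofReal ((μhat n ω x - μ x) ^ 2 * pX x)) ^ ((1 : ℝ) / 2)})
        atTop (nhds 0))
    -- |f − μ̂_n| ≤ U on 𝒳 for all f ∈ F₂, almost surely
    (hbdd : ∀ n, ∀ᵐ ω ∂P, ∀ f ∈ F2, ∀ x ∈ 𝒳, |f x - μhat n ω x| ≤ U)
    -- minimizers of the synthetic excess risk over F₁ and F₂
    (ft1 ft2 : ℕ → Ω → (Fin k → ℝ) → ℝ)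
    (hft1 : ∀ n ω, ft1 n ω ∈ F1 ∧ ∀ f ∈ F1,
      (∫⁻ x in 𝒳, ENNReal.ofReal ((ft1 n ω x - μhat n ω x) ^ 2 * pXt x)) ≤
        ∫⁻ x in 𝒳, ENNReal.ofReal ((f x - μhat n ω x) ^ 2 * pXt x))
    (hft2 : ∀ n ω, ft2 n ω ∈ F2 ∧ ∀ f ∈ F2,
      (∫⁻ x in 𝒳, ENNReal.ofReal ((ft2 n ω x - μhat n ω x) ^ 2 * pXt x)) ≤
        ∫⁻ x in 𝒳, ENNReal.ofReal ((f x - μhat n ω x) ^ 2 * pXt x))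
    -- measurability of the comparison events
    (hevent : ∀ n, MeasurableSet {ω | Φs (ft2 n ω) < Φs (ft1 n ω)}) :
    Tendsto (fun n => P {ω | Φs (ft2 n ω) < Φs (ft1 n ω)}) atTop (nhds 1) :=
  stmt14_general 𝒳 h𝒳 pX pXt hpX_meas hpXt_meas hpX_nonneg hpXt_nonneg hpX_int hpXt_int V d hV hd
    hfid μ hμ F1 F2 hF2 Φs hΦs f1 f2 hf2 hf1_min hlt U hU hgap P μhat hμhat_mble hconv hbdd ft1 ft2
    hft1 hft2
end

section
/- Consistent model comparison for classification (Theorem 4, classification part). Assume p_X and p_X̃ satisfy the (V, d)-fidelity level with 0 < d < ∞. Let η : 𝒳 → [0,1] be measurable, let G₁ and G₂ be sets of measurable functions, and for i = 1, 2 let g*_i ∈ G_i minimize Φ_{0-1} over G_i, with Φ_{0-1}(g*₂) < Φ_{0-1}(g*₁). Suppose K_{d,V}·Φ_{0-1}(g*₂)^{d²/(d+1)²} < Φ_{0-1}(g*₁), where K_{d,V} = (d^{1/(d+1)} + d^{−d/(d+1)})^{(2d+1)/(d+1)}·V^{(2d+1)/(d+1)²}. Let (η̂_n)_{n≥1} be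 random measurable functions from 𝒳 to [0,1] on a probability space (Ω, P) such that the real random variables ‖η̂_n − η‖_{L²(P_X)} are measurable and converge to 0 in probability as n → ∞. For each n and ω, let g̃*_{i,n,ω} ∈ G_i minimize Φ̃_{0-1}^{(n,ω)}(g) = ∫ 1{sign(g(x)) ≠ sign(η̂_n(ω)(x) − 1/2)}·|2η̂_n(ω)(x) − 1|·p_X̃(x) dx over G_i (i = 1, 2), and assume the events {ω : Φ_{0-1}(g̃*_{1,n,ω}) > Φ_{0-1}(g̃*_{2,n,ω})} are measurable. Then P( Φ_{0-1}(g̃*_{1,n}) > Φ_{0-1}(g̃*_{2,n}) ) → 1 as n → ∞. -/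
/-!
Splitting at the level set `{C q ≤ p}`, the `(V, d)`-fidelity bound gives
`∫ h p ≤ C ∫ h q + V C^{-d}` for every `[0, 1]`-valued `h` and every `C > 0`;
optimising over `C` yields `∫ h p ≤ T (∫ h q)` in both directions, where `T a = κ a^{d/(d+1)}`
and `κ = (d^{1/(d+1)} + d^{-d/(d+1)}) V^{1/(d+1)}`. The 0-1 excess loss is 2-Lipschitz in the
regression function, so for the synthetic minimiser `g̃₂` over `G₂`, with `Φ̃` the risks
under `p_X̃` and `D̃`, `D` the `L¹(p_X̃)`, `L¹(p_X)` distances between `η̂` and `η`,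
`Φ(g̃₂) ≤ T(Φ̃_η(g̃₂)) ≤ T(Φ̃_η̂(g*₂) + 2D̃) ≤ T(Φ̃_η(g*₂) + 4D̃) ≤ T(T(Φ(g*₂)) + 4 T(D))`.
Since `T (T a) = K_{d,V} a^{d²/(d+1)²}` and `D ≤ ‖η̂ - η‖_{L²(P_X)}`, the gap condition makes
the right side smaller than `Φ(g*₁) ≤ Φ(g̃₁)` as soon as `D` is small, which happens with
probability tending to one.
-/

open MeasureTheory Filter Set Topology

noncomputable def transferBound (d V a : ℝ) : ℝ :=
  (d ^ (1 / (d + 1)) + d ^ (-(d / (d + 1)))) * V ^ (1 / (d + 1)) * a ^ (d / (d + 1))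

section transferBound

variable {d V : ℝ}

lemma transferBound_nonneg (hd : 0 ≤ d) (hV : 0 ≤ V) {a : ℝ} (ha : 0 ≤ a) :
    0 ≤ transferBound d V a := by
  unfold transferBound; positivity

lemma transferBound_zero (hd : 0 < d) : transferBound d V 0 = 0 := by
  rw [transferBound, Real.zero_rpow (by positivity), mul_zero]

lemma transferBound_mono (hd : 0 ≤ d) (hV : 0 ≤ V) {a b : ℝ} (ha : 0 ≤ a) (hab : a ≤ b) :
    transferBound d V a ≤ transferBound d V b := by
  unfold transferBound; gcongr

lemma continuous_transferBound (hd : 0 ≤ d) : Continuous (transferBound d V) :=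
  continuous_const.mul (Real.continuous_rpow_const (by positivity))

lemma transferBound_transferBound (hd : 0 < d) (hV : 0 ≤ V) {a : ℝ} (ha : 0 ≤ a) :
    transferBound d V (transferBound d V a) =
      (d ^ (1 / (d + 1)) + d ^ (-(d / (d + 1)))) ^ ((2 * d + 1) / (d + 1))
        * V ^ ((2 * d + 1) / (d + 1) ^ 2) * a ^ (d ^ 2 / (d + 1) ^ 2) := by
  set c := d ^ (1 / (d + 1)) + d ^ (-(d / (d + 1)))
  have hc : 0 ≤ c := by positivity
  simp only [transferBound]
  rw [Real.mul_rpow (by positivity) (by positivity), Real.mul_rpow hc (by positivity),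
    ← Real.rpow_mul hV, ← Real.rpow_mul ha]
  calc c * V ^ (1 / (d + 1)) * (c ^ (d / (d + 1)) * V ^ (1 / (d + 1) * (d / (d + 1)))
        * a ^ (d / (d + 1) * (d / (d + 1))))
      = (c * c ^ (d / (d + 1))) * (V ^ (1 / (d + 1)) * V ^ (1 / (d + 1) * (d / (d + 1))))
          * a ^ (d / (d + 1) * (d / (d + 1))) := by ring
    _ = _ := by
      have e₁ : 1 + d / (d + 1) = (2 * d + 1) / (d + 1) := by field_simp; ring
      have e₂ : 1 / (d + 1) + 1 / (d + 1) * (d / (d + 1)) = (2 * d + 1) / (d + 1) ^ 2 := by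
        field_simp; ring
      have e₃ : d / (d + 1) * (d / (d + 1)) = d ^ 2 / (d + 1) ^ 2 := by field_simp
      rw [← Real.rpow_one_add' hc (by positivity), ← Real.rpow_add' hV (by positivity),
        e₁, e₂, e₃]

lemma transferBound_eq_min {B : ℝ} (hd : 0 < d) (hV : 0 < V) (hB : 0 < B) :
    (d * V / B) ^ (1 / (d + 1)) * B + V * ((d * V / B) ^ (1 / (d + 1))) ^ (-d) =
      transferBound d V B := by
  obtain ⟨v, rfl⟩ : ∃ v, V = Real.exp v := ⟨_, (Real.exp_log hV).symm⟩
  obtain ⟨b, rfl⟩ : ∃ b, B = Real.exp b := ⟨_, (Real.exp_log hB).symm⟩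
  have hdVB : d * Real.exp v / Real.exp b = Real.exp (Real.log d + v - b) := by
    rw [Real.exp_sub, Real.exp_add, Real.exp_log hd]
  rw [transferBound, hdVB, Real.rpow_def_of_pos hd, Real.rpow_def_of_pos hd]
  simp only [← Real.exp_mul, ← Real.exp_add, add_mul]
  congr 2 <;> field_simp <;> ring

lemma le_transferBound_of_forall_le {a B : ℝ} (hd : 0 < d) (hV : 0 ≤ V) (hB : 0 ≤ B)
    (h : ∀ C, 0 < C → a ≤ C * B + V * C ^ (-d)) : a ≤ transferBound d V B := by
  -- perturbing `V` and `B` makes the optimal level `C` available even when one of them vanishes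
  have hε : ∀ ε > 0, a ≤ transferBound d (V + ε) (B + ε) := by
    intro ε hε
    set C := (d * (V + ε) / (B + ε)) ^ (1 / (d + 1))
    have hC : 0 < C := by positivity
    calc a ≤ C * B + V * C ^ (-d) := h C hC
      _ ≤ C * (B + ε) + (V + ε) * C ^ (-d) := by gcongr <;> linarith
      _ = transferBound d (V + ε) (B + ε) := transferBound_eq_min hd (by linarith) (by linarith)
  have hcont : Continuous fun ε => transferBound d (V + ε) (B + ε) := by
    unfold transferBound
    fun_prop (disch := positivity)
  have hlim := ((hcont.tendsto 0).mono_left (nhdsWithin_le_nhds (s := Ioi 0)))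
  simp only [add_zero] at hlim
  exact ge_of_tendsto hlim (eventually_nhdsWithin_of_forall hε)

lemma exists_pos_forall_transferBound_lt (hd : 0 < d) (hV : 0 ≤ V) {a b : ℝ} (ha : 0 ≤ a)
    (hab : transferBound d V (transferBound d V a) < b) :
    ∃ δ > 0, ∀ u, 0 ≤ u → u ≤ δ →
      transferBound d V (transferBound d V a + 4 * transferBound d V u) < b := by
  have hcont :
      Continuous fun u => transferBound d V (transferBound d V a + 4 * transferBound d V u) :=
    (continuous_transferBound hd.le).comp
      (continuous_const.add (continuous_const.mul (continuous_transferBound hd.le)))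
  have hlt : ∀ᶠ u in 𝓝[>] 0,
      transferBound d V (transferBound d V a + 4 * transferBound d V u) < b := by
    refine ((hcont.tendsto 0).mono_left nhdsWithin_le_nhds).eventually_lt_const ?_
    simpa [transferBound_zero hd] using hab
  obtain ⟨δ, hδb, hδ⟩ := (hlt.and self_mem_nhdsWithin).exists
  refine ⟨δ, hδ, fun u hu huδ => lt_of_le_of_lt ?_ hδb⟩
  have hTa := transferBound_nonneg hd.le hV ha
  have hTu := transferBound_nonneg hd.le hV hu
  refine transferBound_mono hd.le hV (by positivity) ?_
  gcongr
  exact transferBound_mono hd.le hV hu huδ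

end transferBound

noncomputable def zeroOneExcessLoss {α : Type*} (g η : α → ℝ) (x : α) : ℝ :=
  if (0 ≤ g x) ↔ (0 ≤ η x - 1 / 2) then 0 else |2 * η x - 1|

namespace zeroOneExcessLoss

variable {α : Type*} {g η η' : α → ℝ} {x : α}

lemma nonneg : 0 ≤ zeroOneExcessLoss g η x := by
  unfold zeroOneExcessLoss; split_ifs <;> positivity

lemma mem_Icc (hη : η x ∈ Icc 0 1) : zeroOneExcessLoss g η x ∈ Icc 0 1 := by
  refine ⟨nonneg, ?_⟩
  unfold zeroOneExcessLoss
  split_ifs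
  · exact zero_le_one
  · exact abs_le.2 ⟨by linarith [hη.1], by linarith [hη.2]⟩

lemma le_add_two_mul_abs_sub :
    zeroOneExcessLoss g η x ≤ zeroOneExcessLoss g η' x + 2 * |η x - η' x| := by
  unfold zeroOneExcessLoss
  split_ifs <;> grind

variable [MeasurableSpace α]

lemma measurable (hg : Measurable g) (hη : Measurable η) :
    Measurable (zeroOneExcessLoss g η) := by
  refine Measurable.ite ?_ measurable_const (by fun_prop)
  exact (measurableSet_le measurable_const hg).iff (measurableSet_le measurable_const (by fun_prop))

end zeroOneExcessLoss

section Transfer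

variable {α : Type*} [MeasurableSpace α] {μ : Measure α} {S : Set α} {p q h : α → ℝ}

structure IsDensityOn (μ : Measure α) (S : Set α) (p : α → ℝ) : Prop where
  measurable : Measurable p
  nonneg : ∀ x ∈ S, 0 ≤ p x
  integrableOn : IntegrableOn p S μ

def HasFidelityOn (μ : Measure α) (S : Set α) (V d : ℝ) (p q : α → ℝ) : Prop :=
  ∀ C : ℝ, 0 < C → ∫ x in {x ∈ S | C * q x ≤ p x}, p x ∂μ ≤ V * C ^ (-d)

namespace IsDensityOn

lemma integrableOn_mul (hp : IsDensityOn μ S p) (hS : MeasurableSet S) (hh : Measurable h)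
    (h01 : ∀ x ∈ S, h x ∈ Icc 0 1) : IntegrableOn (fun x => h x * p x) S μ := by
  refine hp.integrableOn.bdd_mul (c := 1) hh.aestronglyMeasurable ?_
  filter_upwards [ae_restrict_mem hS] with x hx
  exact abs_le.2 ⟨by linarith [(h01 x hx).1], (h01 x hx).2⟩

lemma setIntegral_mul_nonneg (hp : IsDensityOn μ S p) (hS : MeasurableSet S)
    (h0 : ∀ x ∈ S, 0 ≤ h x) : 0 ≤ ∫ x in S, h x * p x ∂μ :=
  setIntegral_nonneg hS fun x hx => mul_nonneg (h0 x hx) (hp.nonneg x hx)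

lemma setIntegral_mul_le_const_mul_add (hp : IsDensityOn μ S p) (hq : IsDensityOn μ S q)
    (hS : MeasurableSet S) (hh : Measurable h) (h01 : ∀ x ∈ S, h x ∈ Icc 0 1)
    {C : ℝ} (hC : 0 < C) :
    ∫ x in S, h x * p x ∂μ ≤
      C * ∫ x in S, h x * q x ∂μ + ∫ x in {x ∈ S | C * q x ≤ p x}, p x ∂μ := by
  set A := {x | C * q x ≤ p x}
  have hA : MeasurableSet A := measurableSet_le (hq.measurable.const_mul C) hp.measurable
  have hpA : IntegrableOn (A.indicator p) S μ := hp.integrableOn.indicator hA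
  have hpt : ∀ x ∈ S, h x * p x ≤ C * (h x * q x) + A.indicator p x := by
    intro x hx
    obtain ⟨h0, h1⟩ := h01 x hx
    have hChq : 0 ≤ C * (h x * q x) := by have := hq.nonneg x hx; positivity
    by_cases hxA : x ∈ A
    · rw [indicator_of_mem hxA]
      linarith [mul_le_of_le_one_left (hp.nonneg x hx) h1]
    · rw [indicator_of_notMem hxA, add_zero, mul_left_comm]
      exact mul_le_mul_of_nonneg_left (not_le.1 hxA).le h0
  calc ∫ x in S, h x * p x ∂μ ≤ ∫ x in S, C * (h x * q x) + A.indicator p x ∂μ :=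
        setIntegral_mono_on (hp.integrableOn_mul hS hh h01)
          (((hq.integrableOn_mul hS hh h01).const_mul C).add hpA) hS hpt
    _ = _ := by
      rw [integral_add ((hq.integrableOn_mul hS hh h01).const_mul C) hpA, integral_const_mul,
        setIntegral_indicator hA]
      rfl

end IsDensityOn

lemma HasFidelityOn.setIntegral_mul_le_transferBound {V d : ℝ}
    (hfid : HasFidelityOn μ S V d p q) (hp : IsDensityOn μ S p) (hq : IsDensityOn μ S q)
    (hS : MeasurableSet S) (hV : 0 ≤ V) (hd : 0 < d) (hh : Measurable h)
    (h01 : ∀ x ∈ S, h x ∈ Icc 0 1) :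
    ∫ x in S, h x * p x ∂μ ≤ transferBound d V (∫ x in S, h x * q x ∂μ) :=
  le_transferBound_of_forall_le hd hV (hq.setIntegral_mul_nonneg hS fun x hx => (h01 x hx).1)
    fun C hC => (hp.setIntegral_mul_le_const_mul_add hq hS hh h01 hC).trans
      (add_le_add_right (hfid C hC) _)

lemma IsDensityOn.setIntegral_abs_mul_le_sqrt (hp : IsDensityOn μ S p) (hS : MeasurableSet S)
    (hp1 : ∫ x in S, p x ∂μ = 1) {f : α → ℝ} (hf : Measurable f) (hf1 : ∀ x ∈ S, |f x| ≤ 1) :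
    ∫ x in S, |f x| * p x ∂μ ≤ Real.sqrt (∫ x in S, f x ^ 2 * p x ∂μ) := by
  set t := ∫ x in S, |f x| * p x ∂μ
  have h1 : IntegrableOn (fun x => |f x| * p x) S μ :=
    hp.integrableOn_mul hS hf.abs fun x hx => ⟨abs_nonneg _, hf1 x hx⟩
  have h2 : IntegrableOn (fun x => f x ^ 2 * p x) S μ :=
    hp.integrableOn_mul hS (hf.pow_const 2) fun x hx =>
      ⟨sq_nonneg _, by nlinarith [abs_nonneg (f x), hf1 x hx, sq_abs (f x)]⟩
  have hvar : 0 ≤ ∫ x in S, (|f x| - t) ^ 2 * p x ∂μ :=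
    setIntegral_nonneg hS fun x hx => mul_nonneg (sq_nonneg _) (hp.nonneg x hx)
  have hexpand : ∫ x in S, (|f x| - t) ^ 2 * p x ∂μ =
      ∫ x in S, f x ^ 2 * p x ∂μ - 2 * t * t + t ^ 2 * ∫ x in S, p x ∂μ := by
    have hpt : ∀ x, (|f x| - t) ^ 2 * p x =
        f x ^ 2 * p x - 2 * t * (|f x| * p x) + t ^ 2 * p x := fun x => by
      linear_combination p x * sq_abs (f x)
    simp only [hpt]
    rw [integral_add ?_ (hp.integrableOn.const_mul _), integral_sub h2 (h1.const_mul _),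
      integral_const_mul, integral_const_mul]
    exact h2.sub (h1.const_mul _)
  rw [hexpand, hp1] at hvar
  exact Real.le_sqrt_of_sq_le (by linarith)

noncomputable def excessRisk (μ : Measure α) (S : Set α) (p η g : α → ℝ) : ℝ :=
  ∫ x in S, zeroOneExcessLoss g η x * p x ∂μ

lemma IsDensityOn.excessRisk_nonneg (hp : IsDensityOn μ S p) (hS : MeasurableSet S)
    (η g : α → ℝ) : 0 ≤ excessRisk μ S p η g :=
  hp.setIntegral_mul_nonneg hS fun _ _ => zeroOneExcessLoss.nonneg

lemma IsDensityOn.excessRisk_le_add (hp : IsDensityOn μ S p) (hS : MeasurableSet S)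
    {g η η' : α → ℝ} (hg : Measurable g) (hη : Measurable η) (hη' : Measurable η')
    (hη01 : ∀ x ∈ S, η x ∈ Icc 0 1) (hη'01 : ∀ x ∈ S, η' x ∈ Icc 0 1) :
    excessRisk μ S p η g ≤ excessRisk μ S p η' g + 2 * ∫ x in S, |η x - η' x| * p x ∂μ := by
  have hint : ∀ {e : α → ℝ}, Measurable e → (∀ x ∈ S, e x ∈ Icc 0 1) →
      IntegrableOn (fun x => zeroOneExcessLoss g e x * p x) S μ := fun he he01 =>
    hp.integrableOn_mul hS (zeroOneExcessLoss.measurable hg he)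
      fun x hx => zeroOneExcessLoss.mem_Icc (he01 x hx)
  have hdiff : IntegrableOn (fun x => |η x - η' x| * p x) S μ :=
    hp.integrableOn_mul hS (hη.sub hη').abs
      fun x hx => ⟨abs_nonneg _, Real.dist_le_of_mem_Icc_01 (hη01 x hx) (hη'01 x hx)⟩
  rw [excessRisk, excessRisk, ← integral_const_mul, ← integral_add (hint hη' hη'01)
    (hdiff.const_mul 2)]
  refine setIntegral_mono_on (hint hη hη01) ((hint hη' hη'01).add (hdiff.const_mul 2)) hS
    fun x hx => ?_
  linarith [mul_le_mul_of_nonneg_right (zeroOneExcessLoss.le_add_two_mul_abs_sub (g := g)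
    (η := η) (η' := η') (x := x)) (hp.nonneg x hx)]

theorem excessRisk_le_of_synthetic_excessRisk_le {V d : ℝ} (hS : MeasurableSet S)
    (hp : IsDensityOn μ S p) (hq : IsDensityOn μ S q)
    (hpq : HasFidelityOn μ S V d p q) (hqp : HasFidelityOn μ S V d q p) (hV : 0 ≤ V)
    (hd : 0 < d) {η η' g g' : α → ℝ} (hη : Measurable η) (hη' : Measurable η')
    (hη01 : ∀ x ∈ S, η x ∈ Icc 0 1) (hη'01 : ∀ x ∈ S, η' x ∈ Icc 0 1)
    (hg : Measurable g) (hg' : Measurable g')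
    (hmin : excessRisk μ S q η' g' ≤ excessRisk μ S q η' g) :
    excessRisk μ S p η g' ≤ transferBound d V (transferBound d V (excessRisk μ S p η g)
      + 4 * transferBound d V (∫ x in S, |η' x - η x| * p x ∂μ)) := by
  have hdist : ∀ x ∈ S, |η' x - η x| ∈ Icc 0 1 := fun x hx =>
    ⟨abs_nonneg _, Real.dist_le_of_mem_Icc_01 (hη'01 x hx) (hη01 x hx)⟩
  have hsymm : ∫ x in S, |η x - η' x| * q x ∂μ = ∫ x in S, |η' x - η x| * q x ∂μ := by
    simp_rw [abs_sub_comm (η _)]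
  have hdiff : ∫ x in S, |η' x - η x| * q x ∂μ ≤
      transferBound d V (∫ x in S, |η' x - η x| * p x ∂μ) :=
    hqp.setIntegral_mul_le_transferBound hq hp hS hV hd (hη'.sub hη).abs hdist
  have hsynth : excessRisk μ S q η g' ≤ transferBound d V (excessRisk μ S p η g)
      + 4 * transferBound d V (∫ x in S, |η' x - η x| * p x ∂μ) :=
    calc excessRisk μ S q η g'
        ≤ excessRisk μ S q η' g' + 2 * ∫ x in S, |η' x - η x| * q x ∂μ :=
          hsymm ▸ hq.excessRisk_le_add hS hg' hη hη' hη01 hη'01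
      _ ≤ excessRisk μ S q η' g + 2 * ∫ x in S, |η' x - η x| * q x ∂μ := by gcongr
      _ ≤ excessRisk μ S q η g + 4 * ∫ x in S, |η' x - η x| * q x ∂μ := by
          linarith [hq.excessRisk_le_add hS hg hη' hη hη'01 hη01]
      _ ≤ _ := add_le_add
          (hqp.setIntegral_mul_le_transferBound hq hp hS hV hd
            (zeroOneExcessLoss.measurable hg hη) fun x hx => zeroOneExcessLoss.mem_Icc (hη01 x hx))
          (mul_le_mul_of_nonneg_left hdiff (by norm_num))
  calc excessRisk μ S p η g' ≤ transferBound d V (excessRisk μ S q η g') :=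
        hpq.setIntegral_mul_le_transferBound hp hq hS hV hd
          (zeroOneExcessLoss.measurable hg' hη) fun x hx => zeroOneExcessLoss.mem_Icc (hη01 x hx)
    _ ≤ _ := transferBound_mono hd.le hV (hq.excessRisk_nonneg hS η g') hsynth

end Transfer

lemma tendsto_measure_of_compl_subset {ι Ω : Type*} [MeasurableSpace Ω] {P : Measure Ω}
    [IsProbabilityMeasure P] {l : Filter ι} {A B : ι → Set Ω} (hAB : ∀ i, (B i)ᶜ ⊆ A i)
    (hB : Tendsto (fun i => P (B i)) l (𝓝 0)) : Tendsto (fun i => P (A i)) l (𝓝 1) := by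
  have hlow : ∀ i, 1 - P (B i) ≤ P (A i) := fun i => by
    rw [tsub_le_iff_right]
    calc 1 = P univ := measure_univ.symm
      _ ≤ P (A i ∪ B i) := measure_mono fun ω _ => by
          by_cases hω : ω ∈ B i
          · exact Or.inr hω
          · exact Or.inl (hAB i hω)
      _ ≤ P (A i) + P (B i) := measure_union_le _ _
  have hlim : Tendsto (fun i => 1 - P (B i)) l (𝓝 1) := by
    simpa using ENNReal.Tendsto.sub tendsto_const_nhds hB (Or.inl ENNReal.one_ne_top)
  exact tendsto_of_tendsto_of_tendsto_of_le_of_le hlim tendsto_const_nhds hlow fun _ => prob_le_one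

theorem stmt15_general
    {k : ℕ} (𝒳 : Set (Fin k → ℝ)) (h𝒳 : MeasurableSet 𝒳)
    (pX pXt : (Fin k → ℝ) → ℝ)
    (hpX_meas : Measurable pX) (hpXt_meas : Measurable pXt)
    (hpX_nonneg : ∀ x ∈ 𝒳, 0 ≤ pX x) (hpXt_nonneg : ∀ x ∈ 𝒳, 0 ≤ pXt x)
    (hpX_int : IntegrableOn pX 𝒳) (hpXt_int : IntegrableOn pXt 𝒳)
    (hpX_one : (∫ x in 𝒳, pX x) = 1)
    (V d : ℝ) (hV : 0 ≤ V) (hd : 0 < d)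
    -- (V, d)-fidelity level
    (hfid : ∀ C : ℝ, 0 < C →
      (∫ x in {x ∈ 𝒳 | C * pXt x ≤ pX x}, pX x) ≤ V * C ^ (-d) ∧
      (∫ x in {x ∈ 𝒳 | C * pX x ≤ pXt x}, pXt x) ≤ V * C ^ (-d))
    (η : (Fin k → ℝ) → ℝ) (hη : Measurable η)
    (hη01 : ∀ x ∈ 𝒳, η x ∈ Set.Icc (0 : ℝ) 1)
    (G1 G2 : Set ((Fin k → ℝ) → ℝ))
    (hG2 : ∀ g ∈ G2, Measurable g)
    -- excess 0-1 risk under the original distribution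
    (Φ01 : ((Fin k → ℝ) → ℝ) → ℝ)
    (hΦ01 : ∀ g, Φ01 g =
      ∫ x in 𝒳, (if (0 ≤ g x) ↔ (0 ≤ η x - 1 / 2) then (0 : ℝ) else |2 * η x - 1|) * pX x)
    (g1 g2 : (Fin k → ℝ) → ℝ) (hg2 : g2 ∈ G2)
    (hg1_min : ∀ g ∈ G1, Φ01 g1 ≤ Φ01 g)
    -- gap condition: K_{d,V} Φ_{0-1}(g*₂)^{d²/(d+1)²} < Φ_{0-1}(g*₁)
    (hgap : ((d ^ (1 / (d + 1)) + d ^ (-(d / (d + 1)))) ^ ((2 * d + 1) / (d + 1))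
          * V ^ ((2 * d + 1) / (d + 1) ^ 2)) * Φ01 g2 ^ (d ^ 2 / (d + 1) ^ 2) < Φ01 g1)
    -- the sequence of estimates η̂_n on a probability space (Ω, P)
    {Ω : Type*} [MeasurableSpace Ω] (P : Measure Ω) [IsProbabilityMeasure P]
    (ηhat : ℕ → Ω → (Fin k → ℝ) → ℝ)
    (hηhat_mble : ∀ n ω, Measurable (ηhat n ω))
    (hηhat01 : ∀ n ω, ∀ x ∈ 𝒳, ηhat n ω x ∈ Set.Icc (0 : ℝ) 1)
    -- ‖η̂_n − η‖_{L²(P_X)} → 0 in probability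
    (hconv : ∀ ε : ℝ, 0 < ε →
      Tendsto (fun n => P {ω | ε <
          Real.sqrt (∫ x in 𝒳, (ηhat n ω x - η x) ^ 2 * pX x)}) atTop (nhds 0))
    -- minimizers of the synthetic excess risk over G₁ and G₂
    (gt1 gt2 : ℕ → Ω → (Fin k → ℝ) → ℝ)
    (hgt1 : ∀ n ω, gt1 n ω ∈ G1 ∧ ∀ g ∈ G1,
      (∫ x in 𝒳, (if (0 ≤ gt1 n ω x) ↔ (0 ≤ ηhat n ω x - 1 / 2) then (0 : ℝ)
          else |2 * ηhat n ω x - 1|) * pXt x) ≤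
        ∫ x in 𝒳, (if (0 ≤ g x) ↔ (0 ≤ ηhat n ω x - 1 / 2) then (0 : ℝ)
          else |2 * ηhat n ω x - 1|) * pXt x)
    (hgt2 : ∀ n ω, gt2 n ω ∈ G2 ∧ ∀ g ∈ G2,
      (∫ x in 𝒳, (if (0 ≤ gt2 n ω x) ↔ (0 ≤ ηhat n ω x - 1 / 2) then (0 : ℝ)
          else |2 * ηhat n ω x - 1|) * pXt x) ≤
        ∫ x in 𝒳, (if (0 ≤ g x) ↔ (0 ≤ ηhat n ω x - 1 / 2) then (0 : ℝ)
          else |2 * ηhat n ω x - 1|) * pXt x) :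
    Tendsto (fun n => P {ω | Φ01 (gt2 n ω) < Φ01 (gt1 n ω)}) atTop (nhds 1) := by
  have hpX : IsDensityOn volume 𝒳 pX := ⟨hpX_meas, hpX_nonneg, hpX_int⟩
  have hpXt : IsDensityOn volume 𝒳 pXt := ⟨hpXt_meas, hpXt_nonneg, hpXt_int⟩
  have hΦ2 : 0 ≤ Φ01 g2 := (hΦ01 g2).trans_ge (hpX.excessRisk_nonneg h𝒳 η g2)
  rw [← transferBound_transferBound hd hV hΦ2] at hgap
  obtain ⟨δ, hδ, hδgap⟩ := exists_pos_forall_transferBound_lt hd hV hΦ2 hgap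
  refine tendsto_measure_of_compl_subset (fun n ω hω => ?_) (hconv δ hδ)
  have hL1 := hpX.setIntegral_abs_mul_le_sqrt h𝒳 hpX_one ((hηhat_mble n ω).sub hη)
    fun x hx => Real.dist_le_of_mem_Icc_01 (hηhat01 n ω x hx) (hη01 x hx)
  calc Φ01 (gt2 n ω)
      ≤ transferBound d V (transferBound d V (Φ01 g2)
          + 4 * transferBound d V (∫ x in 𝒳, |ηhat n ω x - η x| * pX x)) := by
        rw [hΦ01, hΦ01]
        exact excessRisk_le_of_synthetic_excessRisk_le h𝒳 hpX hpXt (fun C hC => (hfid C hC).1)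
          (fun C hC => (hfid C hC).2) hV hd hη (hηhat_mble n ω) hη01 (hηhat01 n ω)
          (hG2 _ hg2) (hG2 _ (hgt2 n ω).1) ((hgt2 n ω).2 g2 hg2)
    _ < Φ01 g1 := hδgap _ (hpX.setIntegral_mul_nonneg h𝒳 fun _ _ => abs_nonneg _)
        (hL1.trans (not_lt.1 hω))
    _ ≤ Φ01 (gt1 n ω) := hg1_min _ (hgt1 n ω).1

/-- **Consistent model comparison for classification (Theorem 4, classification
part).**  `sign(t) = 1` when `t ≥ 0` and `−1` otherwise; the excess 0-1 risk is
`Φ_{0-1}(g) = ∫ 1{sign(g) ≠ sign(η − 1/2)} |2η − 1| p_X`.  `g1`, `g2` minimize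
`Φ_{0-1}` over `G₁`, `G₂` with `Φ_{0-1}(g2) < Φ_{0-1}(g1)` and the gap condition
`K_{d,V} Φ_{0-1}(g2)^{d²/(d+1)²} < Φ_{0-1}(g1)`; `‖η̂_n − η‖_{L²(P_X)} → 0` in
probability; and `gt1 n ω`, `gt2 n ω` minimize the synthetic excess risk
`Φ̃_{0-1}^{(n,ω)}` (built from `η̂_n(ω)` and `p_X̃`) over `G₁`, `G₂`.  Then
`P(Φ_{0-1}(gt2 n) < Φ_{0-1}(gt1 n)) → 1`. -/
theorem stmt15
    {k : ℕ} (𝒳 : Set (Fin k → ℝ)) (h𝒳 : MeasurableSet 𝒳)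
    (pX pXt : (Fin k → ℝ) → ℝ)
    (hpX_meas : Measurable pX) (hpXt_meas : Measurable pXt)
    (hpX_nonneg : ∀ x ∈ 𝒳, 0 ≤ pX x) (hpXt_nonneg : ∀ x ∈ 𝒳, 0 ≤ pXt x)
    (hpX_int : IntegrableOn pX 𝒳) (hpXt_int : IntegrableOn pXt 𝒳)
    (hpX_one : (∫ x in 𝒳, pX x) = 1) (hpXt_one : (∫ x in 𝒳, pXt x) = 1)
    (V d : ℝ) (hV : 0 ≤ V) (hd : 0 < d)
    -- (V, d)-fidelity level
    (hfid : ∀ C : ℝ, 0 < C →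
      (∫ x in {x ∈ 𝒳 | C * pXt x ≤ pX x}, pX x) ≤ V * C ^ (-d) ∧
      (∫ x in {x ∈ 𝒳 | C * pX x ≤ pXt x}, pXt x) ≤ V * C ^ (-d))
    (η : (Fin k → ℝ) → ℝ) (hη : Measurable η)
    (hη01 : ∀ x ∈ 𝒳, η x ∈ Set.Icc (0 : ℝ) 1)
    (G1 G2 : Set ((Fin k → ℝ) → ℝ))
    (hG1 : ∀ g ∈ G1, Measurable g) (hG2 : ∀ g ∈ G2, Measurable g)
    -- excess 0-1 risk under the original distribution
    (Φ01 : ((Fin k → ℝ) → ℝ) → ℝ)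
    (hΦ01 : ∀ g, Φ01 g =
      ∫ x in 𝒳, (if (0 ≤ g x) ↔ (0 ≤ η x - 1 / 2) then (0 : ℝ) else |2 * η x - 1|) * pX x)
    (g1 g2 : (Fin k → ℝ) → ℝ) (hg1 : g1 ∈ G1) (hg2 : g2 ∈ G2)
    (hg1_min : ∀ g ∈ G1, Φ01 g1 ≤ Φ01 g) (hg2_min : ∀ g ∈ G2, Φ01 g2 ≤ Φ01 g)
    (hlt : Φ01 g2 < Φ01 g1)
    -- gap condition: K_{d,V} Φ_{0-1}(g*₂)^{d²/(d+1)²} < Φ_{0-1}(g*₁)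
    (hgap : ((d ^ (1 / (d + 1)) + d ^ (-(d / (d + 1)))) ^ ((2 * d + 1) / (d + 1))
          * V ^ ((2 * d + 1) / (d + 1) ^ 2)) * Φ01 g2 ^ (d ^ 2 / (d + 1) ^ 2) < Φ01 g1)
    -- the sequence of estimates η̂_n on a probability space (Ω, P)
    {Ω : Type*} [MeasurableSpace Ω] (P : Measure Ω) [IsProbabilityMeasure P]
    (ηhat : ℕ → Ω → (Fin k → ℝ) → ℝ)
    (hηhat_mble : ∀ n ω, Measurable (ηhat n ω))
    (hηhat01 : ∀ n ω, ∀ x ∈ 𝒳, ηhat n ω x ∈ Set.Icc (0 : ℝ) 1)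
    (hnorm_meas : ∀ n, Measurable fun ω =>
      Real.sqrt (∫ x in 𝒳, (ηhat n ω x - η x) ^ 2 * pX x))
    -- ‖η̂_n − η‖_{L²(P_X)} → 0 in probability
    (hconv : ∀ ε : ℝ, 0 < ε →
      Tendsto (fun n => P {ω | ε <
          Real.sqrt (∫ x in 𝒳, (ηhat n ω x - η x) ^ 2 * pX x)}) atTop (nhds 0))
    -- minimizers of the synthetic excess risk over G₁ and G₂
    (gt1 gt2 : ℕ → Ω → (Fin k → ℝ) → ℝ)
    (hgt1 : ∀ n ω, gt1 n ω ∈ G1 ∧ ∀ g ∈ G1,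
      (∫ x in 𝒳, (if (0 ≤ gt1 n ω x) ↔ (0 ≤ ηhat n ω x - 1 / 2) then (0 : ℝ)
          else |2 * ηhat n ω x - 1|) * pXt x) ≤
        ∫ x in 𝒳, (if (0 ≤ g x) ↔ (0 ≤ ηhat n ω x - 1 / 2) then (0 : ℝ)
          else |2 * ηhat n ω x - 1|) * pXt x)
    (hgt2 : ∀ n ω, gt2 n ω ∈ G2 ∧ ∀ g ∈ G2,
      (∫ x in 𝒳, (if (0 ≤ gt2 n ω x) ↔ (0 ≤ ηhat n ω x - 1 / 2) then (0 : ℝ)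
          else |2 * ηhat n ω x - 1|) * pXt x) ≤
        ∫ x in 𝒳, (if (0 ≤ g x) ↔ (0 ≤ ηhat n ω x - 1 / 2) then (0 : ℝ)
          else |2 * ηhat n ω x - 1|) * pXt x)
    -- measurability of the comparison events
    (hevent : ∀ n, MeasurableSet {ω | Φ01 (gt2 n ω) < Φ01 (gt1 n ω)}) :
    Tendsto (fun n => P {ω | Φ01 (gt2 n ω) < Φ01 (gt1 n ω)}) atTop (nhds 1) :=
  stmt15_general 𝒳 h𝒳 pX pXt hpX_meas hpXt_meas hpX_nonneg hpXt_nonneg hpX_int hpXt_int hpX_one V d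
    hV hd hfid η hη hη01 G1 G2 hG2 Φ01 hΦ01 g1 g2 hg2 hg1_min hgap P ηhat hηhat_mble hηhat01 hconv
    gt1 gt2 hgt1 hgt2
end

section
/- Infinite χ²-divergence but finite (2, 1)-fidelity level (Example 1). Let p(x) = 2x and p̃(x) = 2 − 2x be probability densities on [0, 1]. Then: (i) χ²(P ‖ P̃) = ∫_0^1 p̃(x)·(p(x)/p̃(x) − 1)² dx = ∞ and χ²(P̃ ‖ P) = ∫_0^1 p(x)·(p̃(x)/p(x) − 1)² dx = ∞; and (ii) p and p̃ satisfy the (2, 1)-fidelity level, i.e., for every C > 0, ∫_{{x ∈ [0,1] : p(x) ≥ C·p̃(x)}} p(x) dx ≤ 2/C and ∫_{{x ∈ [0,1] : p̃(x) ≥ C·p(x)}} p̃(x) dx ≤ 2/C. -/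
open MeasureTheory Set Filter Topology Asymptotics

/-!
Each χ² integrand equals a continuous function that does not vanish at `c` times `(x - c)⁻¹`,
where `c` is the zero of the density in the denominator (`c = 1`, resp. `c = 0`), so it is not
integrable near `c`. For the fidelity level: on `{p ≥ C p̃}` we have `2 - 2x ≤ 2x / C ≤ 2 / C`,
so this set lies in `[1 - 1/C, 1]`, and integrating `p ≤ 2` over it gives at most `2 / C`;
symmetrically `{p̃ ≥ C p} ⊆ [0, 1/C]`.
-/

lemma isBigO_mul_self_of_tendsto {α : Type*} {l : Filter α} {g u : α → ℝ} {y : ℝ}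
    (hg : Tendsto g l (𝓝 y)) (hy : y ≠ 0) : u =O[l] fun x => g x * u x := by
  have hg_ne : ∀ᶠ x in l, g x ≠ 0 := hg.eventually_ne hy
  have hinv : (fun x => (g x)⁻¹) =O[l] fun _ => (1 : ℝ) := (hg.inv₀ hy).isBigO_one ℝ
  refine ((hinv.mul (isBigO_refl (fun x => g x * u x) l)).congr' ?_ ?_)
  · filter_upwards [hg_ne] with x hx
    field_simp
  · simp

lemma lintegral_ofReal_Icc_eq_top_of_sub_inv_isBigO {f : ℝ → ℝ} {a b c : ℝ} (hab : a < b)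
    (hc : c ∈ Icc a b) (hf : (fun x => (x - c)⁻¹) =O[𝓝[≠] c] f)
    (hfm : AEStronglyMeasurable f (volume.restrict (Icc a b)))
    (hnn : 0 ≤ᵐ[volume.restrict (Icc a b)] f) :
    ∫⁻ x in Icc a b, ENNReal.ofReal (f x) = ⊤ := by
  by_contra hfin
  have hon : IntegrableOn f (Icc a b) := (lintegral_ofReal_ne_top_iff_integrable hfm hnn).1 hfin
  refine not_intervalIntegrable_of_sub_inv_isBigO_punctured hf hab.ne
    (by rwa [uIcc_of_le hab.le]) ?_
  exact (intervalIntegrable_iff_integrableOn_Ioc_of_le hab.le).2 (hon.mono_set Ioc_subset_Icc_self)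

lemma setIntegral_le_of_subset_Icc {s : Set ℝ} {f : ℝ → ℝ} {a b M : ℝ} (hab : a ≤ b)
    (hs : s ⊆ Icc a b) (hM : 0 ≤ M) (hf : ∀ x ∈ s, |f x| ≤ M) :
    ∫ x in s, f x ≤ M * (b - a) :=
  calc ∫ x in s, f x ≤ ‖∫ x in s, f x‖ := Real.le_norm_self _
    _ ≤ M * volume.real s :=
      norm_setIntegral_le_of_norm_le_const
        ((measure_mono hs).trans_lt measure_Icc_lt_top) hf
    _ ≤ M * volume.real (Icc a b) := by
      gcongr
      · exact measure_Icc_lt_top.ne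
    _ = M * (b - a) := by rw [Real.volume_real_Icc_of_le hab]

lemma lintegral_chiSq_rising_falling_eq_top :
    ∫⁻ x in Icc (0 : ℝ) 1, ENNReal.ofReal ((2 - 2 * x) * (2 * x / (2 - 2 * x) - 1) ^ 2) = ⊤ := by
  refine lintegral_ofReal_Icc_eq_top_of_sub_inv_isBigO (c := 1) one_pos (by simp) ?_
    (by fun_prop) ?_
  · have hcont : Continuous fun x : ℝ => -(4 * x - 2) ^ 2 / 2 := by fun_prop
    have hg : Tendsto (fun x : ℝ => -(4 * x - 2) ^ 2 / 2) (𝓝[≠] 1) (𝓝 (-2)) :=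
      (hcont.tendsto' 1 _ (by norm_num)).mono_left nhdsWithin_le_nhds
    refine (isBigO_mul_self_of_tendsto hg (by norm_num)).congr' (EventuallyEq.refl _ _) ?_
    filter_upwards [self_mem_nhdsWithin] with x (hx : x ≠ 1)
    have : 2 - 2 * x ≠ 0 := fun h => hx (by linarith)
    have : x - 1 ≠ 0 := sub_ne_zero.2 hx
    field_simp
    ring
  · filter_upwards [ae_restrict_mem measurableSet_Icc] with x hx
    exact mul_nonneg (by linarith [hx.2]) (sq_nonneg _)

lemma lintegral_chiSq_falling_rising_eq_top :
    ∫⁻ x in Icc (0 : ℝ) 1, ENNReal.ofReal ((2 * x) * ((2 - 2 * x) / (2 * x) - 1) ^ 2) = ⊤ := by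
  refine lintegral_ofReal_Icc_eq_top_of_sub_inv_isBigO (c := 0) one_pos (by simp) ?_
    (by fun_prop) ?_
  · have hcont : Continuous fun x : ℝ => (2 - 4 * x) ^ 2 / 2 := by fun_prop
    have hg : Tendsto (fun x : ℝ => (2 - 4 * x) ^ 2 / 2) (𝓝[≠] 0) (𝓝 2) :=
      (hcont.tendsto' 0 _ (by norm_num)).mono_left nhdsWithin_le_nhds
    refine (isBigO_mul_self_of_tendsto hg (by norm_num)).congr' (EventuallyEq.refl _ _) ?_
    filter_upwards [self_mem_nhdsWithin] with x (hx : x ≠ 0)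
    field_simp
    ring
  · filter_upwards [ae_restrict_mem measurableSet_Icc] with x hx
    exact mul_nonneg (by linarith [hx.1]) (sq_nonneg _)

lemma setIntegral_rising_ge_mul_falling_le {C : ℝ} (hC : 0 < C) :
    ∫ x in {x ∈ Icc (0 : ℝ) 1 | C * (2 - 2 * x) ≤ 2 * x}, 2 * x ≤ 2 / C :=
  calc _ ≤ 2 * (1 - (1 - 1 / C)) := by
        refine setIntegral_le_of_subset_Icc (by simp [hC.le]) ?_ zero_le_two ?_
        · rintro x ⟨⟨hx0, hx1⟩, hx⟩
          refine ⟨?_, hx1⟩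
          rw [sub_le_comm, le_div_iff₀ hC]
          linarith
        · rintro x ⟨⟨hx0, hx1⟩, -⟩
          rw [abs_le]
          constructor <;> linarith
    _ = 2 / C := by ring

lemma setIntegral_falling_ge_mul_rising_le {C : ℝ} (hC : 0 < C) :
    ∫ x in {x ∈ Icc (0 : ℝ) 1 | C * (2 * x) ≤ 2 - 2 * x}, 2 - 2 * x ≤ 2 / C :=
  calc _ ≤ 2 * (1 / C - 0) := by
        refine setIntegral_le_of_subset_Icc (by positivity) ?_ zero_le_two ?_
        · rintro x ⟨⟨hx0, hx1⟩, hx⟩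
          refine ⟨hx0, ?_⟩
          rw [le_div_iff₀ hC]
          linarith
        · rintro x ⟨⟨hx0, hx1⟩, -⟩
          rw [abs_le]
          constructor <;> linarith
    _ = 2 / C := by ring

/-- **Infinite χ²-divergence but finite (2, 1)-fidelity level (Example 1).**
`p(x) = 2x` and `p̃(x) = 2 − 2x` on `[0, 1]`: (i) both χ²-divergences (expressed as
lower Lebesgue integrals of the nonnegative integrands) are infinite; (ii) `p` and
`p̃` satisfy the `(2, 1)`-fidelity level: for every `C > 0`,
`∫_{p ≥ C p̃} p ≤ 2/C` and `∫_{p̃ ≥ C p} p̃ ≤ 2/C`. -/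
theorem stmt19 :
    (∫⁻ x in Set.Icc (0 : ℝ) 1,
        ENNReal.ofReal ((2 - 2 * x) * (2 * x / (2 - 2 * x) - 1) ^ 2)) = ⊤ ∧
    (∫⁻ x in Set.Icc (0 : ℝ) 1,
        ENNReal.ofReal ((2 * x) * ((2 - 2 * x) / (2 * x) - 1) ^ 2)) = ⊤ ∧
    ∀ C : ℝ, 0 < C →
      (∫ x in {x ∈ Set.Icc (0 : ℝ) 1 | C * (2 - 2 * x) ≤ 2 * x}, 2 * x) ≤ 2 / C ∧
      (∫ x in {x ∈ Set.Icc (0 : ℝ) 1 | C * (2 * x) ≤ 2 - 2 * x}, 2 - 2 * x) ≤ 2 / C :=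
  ⟨lintegral_chiSq_rising_falling_eq_top, lintegral_chiSq_falling_rising_eq_top,
    fun _ hC => ⟨setIntegral_rising_ge_mul_falling_le hC, setIntegral_falling_ge_mul_rising_le hC⟩⟩
end
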